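/- arXiv:1208.0128 — 3 statements merged into one kernel-verified Lean document; each statement's English description precedes it below -/
import Mathlib

section
/- Let k be a field of characteristic zero and K ⊇ k an algebraically closed field extension. Let B be a commutative k-algebra and let I be a radical ideal of B ⊗_k K such that (B ⊗_k K)/I is a finitely generated K-algebra. For a k-algebra homomorphism f : B → K, let f^K : B ⊗_k K → K denote its K-algebra extension (b ⊗ λ ↦ f(b)·λ). Suppose that for every k-algebra automorphism σ of K and every k-algebra homomorphism f : B → K with I ⊆ ker(f^K), one also has I ⊆ ker((σ ∘ f)^K). Then there exists a radical ideal I_0 ⊆ B such that B/I_0 is a finitely generated k-algebra and I is the ideal of B ⊗_k K generated by the image of I_0 (equivalently, I = I_0 ⊗_k K under the canonical identification). -/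
/-!
By the Nullstellensatz a radical ideal with finitely generated quotient is determined by its
`K`-points, so the hypothesis makes `I` stable under `σ ⊗ id` for every `σ ∈ Aut(K/k)`.
Because `K` is algebraically closed and `k` is perfect, the fixed field of `Aut(K/k)` is `k`:
an automorphism moving `x ∉ k` is obtained by extending along a transcendence basis either a
Galois conjugation of the algebraic closure of `k` in `K` (if `x` is algebraic) or the
translation `x ↦ x + 1` of a transcendence basis containing `x`. Galois descent then applies:
a `K`-subspace of `K ⊗ N` stable under `Aut(K/k)` is spanned by its elements `1 ⊗ n`, because
a nonzero vector in it of minimal support, scaled to have a coordinate `1`, is fixed by every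
`σ`, so its coordinates lie in `k`. So `I` is generated by `I₀ = {b | 1 ⊗ b ∈ I}`, and `B ⧸ I₀` is of finite type by faithfully
flat descent from `K ⊗ (B ⧸ I₀) ≅ (K ⊗ B) ⧸ I`.
-/

open TensorProduct

theorem IsTranscendenceBasis.exists_algEquiv_aeval_eq {k L K ι : Type*} [Field k] [Field L]
    [Field K] [IsAlgClosed K] [Algebra k L] [Algebra L K] [Algebra k K] [IsScalarTower k L K]
    {v : ι → K} (hv : IsTranscendenceBasis L v)
    (g : MvPolynomial ι L ≃ₐ[k] MvPolynomial ι L) :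
    ∃ σ : K ≃ₐ[k] K, ∀ p, σ (MvPolynomial.aeval v p) = MvPolynomial.aeval v (g p) := by
  have := IsAlgClosed.isAlgClosure_of_transcendence_basis v hv
  let e := hv.1.aevalEquiv
  let ψ := IsAlgClosure.equivOfEquiv K K
    (e.symm.toRingEquiv.trans (g.toRingEquiv.trans e.toRingEquiv))
  have hψ : ∀ p, ψ (MvPolynomial.aeval v p) = MvPolynomial.aeval v (g p) := by
    intro p
    rw [← hv.1.algebraMap_aevalEquiv, ← hv.1.algebraMap_aevalEquiv,
      IsAlgClosure.equivOfEquiv_algebraMap]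
    simp [e]
  refine ⟨AlgEquiv.ofRingEquiv (f := ψ) fun c => ?_, hψ⟩
  have hc : algebraMap k K c = MvPolynomial.aeval v (algebraMap k (MvPolynomial ι L) c) := by
    simp [IsScalarTower.algebraMap_apply k L K]
  rw [hc, hψ, g.commutes]

namespace IsAlgClosed

variable {k K : Type*} [Field k] [Field K] [IsAlgClosed K] [Algebra k K]

theorem exists_algEquiv_apply_ne_of_transcendental {x : K} (hx : Transcendental k x) :
    ∃ σ : K ≃ₐ[k] K, σ x ≠ x := by
  have hind : AlgebraicIndepOn k id {x} :=
    (algebraicIndependent_singleton_iff (⟨x, rfl⟩ : ({x} : Set K))).mpr hx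
  obtain ⟨s, hxs, hs⟩ := exists_isTranscendenceBasis_superset hind
  let shift : MvPolynomial s k ≃ₐ[k] MvPolynomial s k :=
    AlgEquiv.ofAlgHom (MvPolynomial.aeval fun i => .X i + 1)
      (MvPolynomial.aeval fun i => .X i - 1) (by ext; simp) (by ext; simp)
  obtain ⟨σ, hσ⟩ := hs.exists_algEquiv_aeval_eq shift
  have hσx : σ x = x + 1 := by simpa [shift] using hσ (.X ⟨x, hxs rfl⟩)
  exact ⟨σ, by simp [hσx]⟩

theorem exists_algEquiv_apply_ne_of_isAlgebraic [PerfectField k] {x : K} (halg : IsAlgebraic k x)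
    (hx : x ∉ Set.range (algebraMap k K)) : ∃ σ : K ≃ₐ[k] K, σ x ≠ x := by
  let xL : algebraicClosure k K := ⟨x, mem_algebraicClosure_iff.mpr halg⟩
  obtain ⟨τ, hτ⟩ : ∃ τ : algebraicClosure k K ≃ₐ[k] algebraicClosure k K, τ xL ≠ xL := by
    by_contra! h
    obtain ⟨c, hc⟩ := (InfiniteGalois.mem_range_algebraMap_iff_fixed xL).mpr h
    exact hx ⟨c, congrArg Subtype.val hc⟩
  obtain ⟨ι, v, hv⟩ := exists_isTranscendenceBasis' (algebraicClosure k K) K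
  obtain ⟨σ, hσ⟩ := hv.exists_algEquiv_aeval_eq (MvPolynomial.mapAlgEquiv ι τ)
  have hσx : σ x = τ xL := by simpa using hσ (.C xL)
  exact ⟨σ, fun h => hτ (Subtype.val_injective (hσx.symm.trans h))⟩

theorem fixedField_top_eq_bot [PerfectField k] :
    IntermediateField.fixedField (⊤ : Subgroup (K ≃ₐ[k] K)) = ⊥ := by
  refine eq_bot_iff.mpr fun x hx => IntermediateField.mem_bot.mpr ?_
  rw [IntermediateField.mem_fixedField_iff] at hx
  by_contra hxk
  obtain ⟨σ, hσ⟩ := (em (IsAlgebraic k x)).elim (exists_algEquiv_apply_ne_of_isAlgebraic · hxk)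
    exists_algEquiv_apply_ne_of_transcendental
  exact hσ (hx σ trivial)

end IsAlgClosed

theorem Module.Basis.baseChange_repr_rTensor {R A B M ι : Type*} [CommRing R] [CommRing A]
    [CommRing B] [Algebra R A] [Algebra R B] [AddCommGroup M] [Module R M]
    (b : Module.Basis ι R M) (f : A →ₐ[R] B) (z : A ⊗[R] M) (i : ι) :
    (b.baseChange B).repr (f.toLinearMap.rTensor M z) i = f ((b.baseChange A).repr z i) := by
  induction z using TensorProduct.induction_on with
  | zero => simp
  | tmul a m => simp [Module.Basis.baseChange_repr_tmul, Algebra.smul_def]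
  | add z₁ z₂ h₁ h₂ => simp [h₁, h₂]

theorem Module.Basis.mem_range_mk_one_of_repr_mem_range {R A M ι : Type*} [CommRing R]
    [CommRing A] [Algebra R A] [AddCommGroup M] [Module R M] (b : Module.Basis ι R M)
    {v : A ⊗[R] M} (hv : ∀ i, (b.baseChange A).repr v i ∈ Set.range (algebraMap R A)) :
    v ∈ LinearMap.range (TensorProduct.mk R A M 1) := by
  choose c hc using hv
  classical
  refine ⟨∑ i ∈ ((b.baseChange A).repr v).support, c i • b i, ?_⟩
  conv_rhs => rw [← (b.baseChange A).linearCombination_repr v]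
  simp [Finsupp.linearCombination_apply, Finsupp.sum, hc, ← algebraMap_smul A]

section GaloisDescent

variable {k K N : Type*} [Field k] [Field K] [Algebra k K] [AddCommGroup N] [Module k N]

theorem exists_ne_zero_one_tmul_mem_of_ne_bot
    (hfix : IntermediateField.fixedField (⊤ : Subgroup (K ≃ₐ[k] K)) = ⊥)
    {V : Submodule K (K ⊗[k] N)}
    (hV : ∀ σ : K ≃ₐ[k] K, ∀ v ∈ V, σ.toLinearMap.rTensor N v ∈ V) (hbot : V ≠ ⊥) :
    ∃ n : N, n ≠ 0 ∧ (1 : K) ⊗ₜ[k] n ∈ V := by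
  classical
  let b := Module.Basis.ofVectorSpace k N
  let c : K ⊗[k] N → _ := (b.baseChange K).repr
  obtain ⟨v, ⟨hvV, hv0⟩, hmin⟩ := (measure fun v => (c v).support.card).wf.has_min
    {v | v ∈ V ∧ v ≠ 0} (Submodule.exists_mem_ne_zero_of_ne_bot hbot)
  obtain ⟨i₀, hi₀⟩ : (c v).support.Nonempty := by simpa [c] using hv0
  have hvi₀ : c v i₀ ≠ 0 := Finsupp.mem_support_iff.mp hi₀
  set u := (c v i₀)⁻¹ • v
  have huV : u ∈ V := V.smul_mem _ hvV
  have hu0 : u ≠ 0 := smul_ne_zero (inv_ne_zero hvi₀) hv0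
  have hcu : c u = (c v i₀)⁻¹ • c v := map_smul _ _ _
  have hsupp : (c u).support = (c v).support := by
    rw [hcu, Finsupp.support_smul_eq (inv_ne_zero hvi₀)]
  have hui₀ : c u i₀ = 1 := by simp [hcu, hvi₀]
  -- `σ u - u` lies in `V` and vanishes at `i₀`, so it has smaller support than `v`.
  have hfixed (σ : K ≃ₐ[k] K) (i) : σ (c u i) = c u i := by
    set w := σ.toLinearMap.rTensor N u - u
    have hcw (j) : c w j = σ (c u j) - c u j := by
      simpa [w, c] using (b.baseChange_repr_rTensor (σ : K →ₐ[k] K) u j)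
    by_contra hne
    refine hmin w ⟨V.sub_mem (hV σ u huV) huV, fun hw => hne ?_⟩ ?_
    · simpa [c, hw, sub_eq_zero] using (hcw i).symm
    calc (c w).support.card ≤ ((c u).support.erase i₀).card := by
          refine Finset.card_le_card fun j hj => ?_
          rw [Finsupp.mem_support_iff, hcw] at hj
          refine Finset.mem_erase.mpr ⟨?_, Finsupp.mem_support_iff.mpr ?_⟩
          · rintro rfl; simp [hui₀] at hj
          · rintro h; simp [h] at hj
      _ < (c v).support.card := hsupp ▸ Finset.card_erase_lt_of_mem (hsupp ▸ hi₀)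
  obtain ⟨n, hn⟩ := b.mem_range_mk_one_of_repr_mem_range fun i =>
    IntermediateField.mem_bot.mp <| hfix ▸
      (IntermediateField.mem_fixedField_iff _ _).mpr fun σ _ => hfixed σ i
  refine ⟨n, ?_, ?_⟩
  · rintro rfl
    exact hu0 (by simpa using hn.symm)
  · rwa [← TensorProduct.mk_apply, hn]

theorem Submodule.ker_baseChange_mkQ {R A M : Type*} [CommRing R] [CommRing A] [Algebra R A]
    [AddCommGroup M] [Module R M] (W : Submodule R M) :
    LinearMap.ker (W.mkQ.baseChange A) = W.baseChange A := by
  ext z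
  have := congr(z ∈ $(lTensor_mkQ A W))
  simpa [LinearMap.baseChange_eq_ltensor, Submodule.baseChange] using this

theorem Submodule.eq_baseChange_of_forall_rTensor_mem
    (hfix : IntermediateField.fixedField (⊤ : Subgroup (K ≃ₐ[k] K)) = ⊥)
    (V : Submodule K (K ⊗[k] N))
    (hV : ∀ σ : K ≃ₐ[k] K, ∀ v ∈ V, σ.toLinearMap.rTensor N v ∈ V) :
    V = ((V.restrictScalars k).comap (TensorProduct.mk k K N 1)).baseChange K := by
  set W := (V.restrictScalars k).comap (TensorProduct.mk k K N 1)
  have hWV : W.baseChange K ≤ V := by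
    rw [Submodule.baseChange_eq_span, Submodule.span_le]
    rintro _ ⟨n, hn, rfl⟩
    exact hn
  let Q := W.mkQ.baseChange K
  have hQ (σ : K ≃ₐ[k] K) (z : K ⊗[k] N) :
      Q (σ.toLinearMap.rTensor N z) = σ.toLinearMap.rTensor (N ⧸ W) (Q z) := by
    induction z using TensorProduct.induction_on with
    | zero => simp
    | tmul a n => simp [Q]
    | add z₁ z₂ h₁ h₂ => simp [h₁, h₂]
  -- The image of `V` in `K ⊗ (N ⧸ W)` is again stable but meets `1 ⊗ (N ⧸ W)` only in `0`.
  have hQV : V.map Q = ⊥ := by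
    by_contra hne
    obtain ⟨n, hn0, z, hzV, hz⟩ := exists_ne_zero_one_tmul_mem_of_ne_bot hfix
      (V := V.map Q) (by rintro σ _ ⟨z, hz, rfl⟩; exact ⟨_, hV σ z hz, hQ σ z⟩) hne
    obtain ⟨n, rfl⟩ := W.mkQ_surjective n
    have hker : z - 1 ⊗ₜ n ∈ V := hWV <| by
      rw [← Submodule.ker_baseChange_mkQ, LinearMap.mem_ker, map_sub, hz]
      simp
    have hn : (1 : K) ⊗ₜ[k] n ∈ V := by simpa using V.sub_mem hzV hker
    exact hn0 ((Submodule.Quotient.mk_eq_zero W).mpr hn)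
  refine le_antisymm (fun z hz => ?_) hWV
  rw [← Submodule.ker_baseChange_mkQ, LinearMap.mem_ker]
  simpa [hQV] using Submodule.mem_map_of_mem (f := Q) hz

theorem Ideal.eq_map_comap_includeRight_of_forall_rTensor_mem
    (hfix : IntermediateField.fixedField (⊤ : Subgroup (K ≃ₐ[k] K)) = ⊥)
    {B : Type*} [CommRing B] [Algebra k B] (I : Ideal (K ⊗[k] B))
    (hI : ∀ σ : K ≃ₐ[k] K, ∀ z ∈ I, σ.toLinearMap.rTensor B z ∈ I) :
    I = (I.comap (Algebra.TensorProduct.includeRight : B →ₐ[k] K ⊗[k] B)).map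
      (Algebra.TensorProduct.includeRight : B →ₐ[k] K ⊗[k] B) := by
  refine le_antisymm (fun z hz => ?_) Ideal.map_comap_le
  have hz' := (Submodule.eq_baseChange_of_forall_rTensor_mem hfix (I.restrictScalars K) hI).le hz
  rw [Submodule.baseChange_eq_span] at hz'
  refine (Submodule.span_le (p := (Ideal.map _ _).restrictScalars K)).mpr ?_ hz'
  rintro _ ⟨b, hb, rfl⟩
  exact Ideal.mem_map_of_mem _ hb

end GaloisDescent

theorem IsAlgClosed.exists_algHom_apply_ne_zero {K A : Type*} [Field K] [IsAlgClosed K]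
    [CommRing A] [Algebra K A] [Algebra.FiniteType K A] [IsReduced A] {a : A} (ha : a ≠ 0) :
    ∃ φ : A →ₐ[K] K, φ a ≠ 0 := by
  have : IsJacobsonRing A := isJacobsonRing_of_finiteType (A := K)
  have hJ : (⊥ : Ideal A).jacobson = ⊥ := IsJacobsonRing.out' _ Ideal.isRadical_bot
  obtain ⟨m, hm, ham⟩ : ∃ m : Ideal A, m.IsMaximal ∧ a ∉ m := by
    have : a ∉ (⊥ : Ideal A).jacobson := by rwa [hJ, Ideal.mem_bot]
    simpa [Ideal.jacobson, Ideal.mem_sInf] using this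
  let := Ideal.Quotient.field m
  have : Algebra.FiniteType K (A ⧸ m) :=
    ‹Algebra.FiniteType K A›.of_surjective _ (Ideal.Quotient.mkₐ_surjective K m)
  have : Module.Finite K (A ⧸ m) := finite_of_finite_type_of_isJacobsonRing K _
  let e := AlgEquiv.ofBijective (Algebra.ofId K (A ⧸ m)) algebraMap_bijective_of_isIntegral
  refine ⟨e.symm.toAlgHom.comp (Ideal.Quotient.mkₐ K m), ?_⟩
  simpa [Ideal.Quotient.eq_zero_iff_mem] using ham

theorem Algebra.TensorProduct.productMap_id_restrictScalars_comp_includeRight {k K B : Type*}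
    [CommRing k] [CommRing K] [Algebra k K] [CommRing B] [Algebra k B] (φ : K ⊗[k] B →ₐ[K] K) :
    productMap (AlgHom.id k K) ((φ.restrictScalars k).comp includeRight) = φ.restrictScalars k := by
  ext
  · simpa using (φ.commutes _).symm
  · simp

theorem Algebra.TensorProduct.productMap_rTensor {k K B : Type*} [CommRing k] [CommRing K]
    [Algebra k K] [CommRing B] [Algebra k B] (σ : K ≃ₐ[k] K) (f : B →ₐ[k] K) (z : K ⊗[k] B) :
    productMap (AlgHom.id k K) f (σ.toLinearMap.rTensor B z) =
      σ (productMap (AlgHom.id k K) (σ.symm.toAlgHom.comp f) z) := by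
  induction z using TensorProduct.induction_on with
  | zero => simp
  | tmul a b => simp
  | add z₁ z₂ h₁ h₂ => simp [h₁, h₂]

theorem Ideal.rTensor_mem_of_forall_le_ker_productMap {k K B : Type*} [CommRing k] [Field K]
    [IsAlgClosed K] [Algebra k K] [CommRing B] [Algebra k B] {I : Ideal (K ⊗[k] B)}
    (hrad : I.IsRadical) [Algebra.FiniteType K ((K ⊗[k] B) ⧸ I)]
    (hinv : ∀ (σ : K ≃ₐ[k] K) (f : B →ₐ[k] K),
      I ≤ RingHom.ker (Algebra.TensorProduct.productMap (AlgHom.id k K) f) →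
      I ≤ RingHom.ker
        (Algebra.TensorProduct.productMap (AlgHom.id k K) (σ.toAlgHom.comp f)))
    (σ : K ≃ₐ[k] K) {z : K ⊗[k] B} (hz : z ∈ I) : σ.toLinearMap.rTensor B z ∈ I := by
  by_contra hσz
  have : IsReduced ((K ⊗[k] B) ⧸ I) := (Ideal.isRadical_iff_quotient_reduced I).mp hrad
  obtain ⟨φ, hφ⟩ := IsAlgClosed.exists_algHom_apply_ne_zero (K := K)
    (a := Ideal.Quotient.mk I (σ.toLinearMap.rTensor B z))
    (by rwa [ne_eq, Ideal.Quotient.eq_zero_iff_mem])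
  let ψ := φ.comp (Ideal.Quotient.mkₐ K I)
  let f : B →ₐ[k] K := (ψ.restrictScalars k).comp Algebra.TensorProduct.includeRight
  have hf := Algebra.TensorProduct.productMap_id_restrictScalars_comp_includeRight ψ
  have hIf : I ≤ RingHom.ker (Algebra.TensorProduct.productMap (AlgHom.id k K) f) := by
    intro y hy
    simp [f, hf, ψ, Ideal.Quotient.eq_zero_iff_mem.mpr hy]
  have h0 := RingHom.mem_ker.mp (hinv σ.symm f hIf hz)
  apply hφ
  calc φ (Ideal.Quotient.mk I (σ.toLinearMap.rTensor B z))
      = Algebra.TensorProduct.productMap (AlgHom.id k K) f (σ.toLinearMap.rTensor B z) := by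
        rw [hf]; rfl
    _ = 0 := by rw [Algebra.TensorProduct.productMap_rTensor, h0, map_zero]

theorem Algebra.FiniteType.of_finiteType_quotient_map_includeRight {k K B : Type*} [CommRing k]
    [CommRing K] [Algebra k K] [Module.FaithfullyFlat k K] [CommRing B] [Algebra k B]
    (I₀ : Ideal B)
    [Algebra.FiniteType K
      ((K ⊗[k] B) ⧸ I₀.map (Algebra.TensorProduct.includeRight : B →ₐ[k] K ⊗[k] B))] :
    Algebra.FiniteType k (B ⧸ I₀) := by
  let g := Algebra.TensorProduct.map (AlgHom.id K K) (Ideal.Quotient.mkₐ k I₀)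
  have hg : Function.Surjective g :=
    LinearMap.lTensor_surjective K (Ideal.Quotient.mkₐ_surjective k I₀)
  have hker : I₀.map Algebra.TensorProduct.includeRight ≤ RingHom.ker g :=
    Ideal.map_le_iff_le_comap.mpr fun b hb => by simp [g, Ideal.Quotient.eq_zero_iff_mem.mpr hb]
  have : Algebra.FiniteType K (K ⊗[k] (B ⧸ I₀)) :=
    ‹Algebra.FiniteType K _›.of_surjective (Ideal.Quotient.liftₐ _ g fun _ ha => hker ha)
      (Ideal.Quotient.lift_surjective_of_surjective _ _ hg)
  exact .of_finiteType_tensorProduct_of_faithfullyFlat K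

/-- Proposition A.2 (Galois descent of closed subschemes, coordinate-ring form):
a radical ideal `I` of `K ⊗[k] B` with finitely generated quotient whose `K`-points
are stable under `Aut(K/k)` is the extension of a radical ideal `I₀ ⊆ B` with
finitely generated quotient. -/
theorem ideal_descends_of_aut_invariant
    (k : Type*) [Field k] [CharZero k]
    (K : Type*) [Field K] [IsAlgClosed K] [Algebra k K]
    (B : Type*) [CommRing B] [Algebra k B]
    (I : Ideal (K ⊗[k] B)) (hrad : I.IsRadical)
    (hfg : Algebra.FiniteType K ((K ⊗[k] B) ⧸ I))
    (hinv : ∀ (σ : K ≃ₐ[k] K) (f : B →ₐ[k] K),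
      I ≤ RingHom.ker (Algebra.TensorProduct.productMap (AlgHom.id k K) f) →
      I ≤ RingHom.ker
        (Algebra.TensorProduct.productMap (AlgHom.id k K) (σ.toAlgHom.comp f))) :
    ∃ I₀ : Ideal B, I₀.IsRadical ∧ Algebra.FiniteType k (B ⧸ I₀) ∧
      I = Ideal.map (Algebra.TensorProduct.includeRight : B →ₐ[k] K ⊗[k] B) I₀ := by
  have hI := Ideal.eq_map_comap_includeRight_of_forall_rTensor_mem
    IsAlgClosed.fixedField_top_eq_bot I
    fun σ _ hz => Ideal.rTensor_mem_of_forall_le_ker_productMap hrad hinv σ hz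
  rw [hI] at hfg
  exact ⟨_, hrad.comap _, .of_finiteType_quotient_map_includeRight (K := K) _, hI⟩
end

section
/- Let k be an algebraically closed field, B a commutative k-algebra, C a reduced finitely generated commutative k-algebra, and φ : B → C an integral k-algebra homomorphism (every element of C is integral over the image of B). Then there exists a unique radical ideal I ⊆ B with the following properties: the quotient B/I is a (reduced) finitely generated k-algebra, and for every k-algebra homomorphism f : B → k one has I ⊆ ker f if and only if there exists a k-algebra homomorphism g : C → k with g ∘ φ = f. -/
/-!
Take `I = ker φ`. It is radical because `C` is reduced, and `B ⧸ I ≅ φ(B)` is of finite type by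
Artin–Tate, since `C` is finite over `φ(B)`. A `k`-point of `B` vanishing on `I` lifts to `C`:
by lying-over its (maximal) kernel is the contraction of a maximal ideal of `C`, which is the
kernel of a `k`-point by the Nullstellensatz. Uniqueness holds because `B ⧸ J` is a Jacobson ring,
so a radical `J` with finite type quotient is the intersection of the kernels of the `k`-points
vanishing on it.
-/

theorem AlgHom.eq_of_ker_le {R A : Type*} [CommRing R] [Ring A] [Algebra R A]
    {f g : A →ₐ[R] R} (h : RingHom.ker f ≤ RingHom.ker g) : f = g := by
  ext a
  have : a - algebraMap R A (f a) ∈ RingHom.ker g := h (by simp [RingHom.mem_ker])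
  rw [RingHom.mem_ker, map_sub, AlgHom.commutes, Algebra.algebraMap_self, RingHom.id_apply,
    sub_eq_zero] at this
  exact this.symm

theorem AlgHom.ker_isMaximal {R A : Type*} [Field R] [Ring A] [Algebra R A]
    (f : A →ₐ[R] R) : (RingHom.ker f).IsMaximal :=
  RingHom.ker_isMaximal_of_surjective f fun r => ⟨algebraMap R A r, f.commutes r⟩

theorem Algebra.FiniteType.of_isIntegral_of_injective {R A C : Type*} [CommRing R]
    [IsNoetherianRing R] [CommRing A] [CommRing C] [Algebra R A] [Algebra R C] [Algebra A C]
    [IsScalarTower R A C] [Algebra.FiniteType R C] [Algebra.IsIntegral A C]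
    (hAC : Function.Injective (algebraMap A C)) : Algebra.FiniteType R A := by
  have : Algebra.FiniteType A C := .of_restrictScalars_finiteType R A C
  have : Module.Finite A C := Algebra.IsIntegral.finite
  exact ⟨fg_of_fg_of_fg R A C Algebra.FiniteType.out Module.Finite.fg_top hAC⟩

theorem AlgHom.finiteType_quotient_ker_of_isIntegral {R B C : Type*} [CommRing R]
    [IsNoetherianRing R] [CommRing B] [Algebra R B] [CommRing C] [Algebra R C]
    [Algebra.FiniteType R C] (φ : B →ₐ[R] C) (hφ : φ.toRingHom.IsIntegral) :
    Algebra.FiniteType R (B ⧸ RingHom.ker φ) := by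
  have : Algebra.IsIntegral φ.range C :=
    ⟨RingHom.IsIntegral.tower_top φ.rangeRestrict.toRingHom (algebraMap φ.range C) hφ⟩
  have : Algebra.FiniteType R φ.range := .of_isIntegral_of_injective Subtype.val_injective
  exact .equiv this (Ideal.quotientKerEquivRange φ).symm

section AlgClosed

variable {k : Type*} [Field k] [IsAlgClosed k]

theorem Ideal.exists_algHom_ker_eq_of_isMaximal {A : Type*} [CommRing A] [Algebra k A]
    (m : Ideal A) [m.IsMaximal] [Algebra.FiniteType k (A ⧸ m)] :
    ∃ f : A →ₐ[k] k, RingHom.ker f = m := by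
  let := Ideal.Quotient.field m
  have : Module.Finite k (A ⧸ m) := finite_of_finite_type_of_isJacobsonRing k (A ⧸ m)
  refine ⟨(IsAlgClosed.lift : A ⧸ m →ₐ[k] k).comp (Ideal.Quotient.mkₐ k m), ?_⟩
  exact (RingHom.ker_comp_of_injective (Ideal.Quotient.mk m)
    (IsAlgClosed.lift : A ⧸ m →ₐ[k] k).toRingHom.injective).trans Ideal.mk_ker

theorem Ideal.IsRadical.le_of_forall_le_ker {B : Type*} [CommRing B] [Algebra k B]
    {I J : Ideal B} (hJ : J.IsRadical) [Algebra.FiniteType k (B ⧸ J)]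
    (h : ∀ f : B →ₐ[k] k, J ≤ RingHom.ker f → I ≤ RingHom.ker f) : I ≤ J := by
  have : IsReduced (B ⧸ J) := (Ideal.isRadical_iff_quotient_reduced J).mp hJ
  have : IsJacobsonRing (B ⧸ J) := isJacobsonRing_of_finiteType (A := k)
  have hJac : J.jacobson = J := Ideal.jacobson_eq_iff_jacobson_quotient_eq_bot.mpr
    (IsJacobsonRing.out ‹_› Ideal.isRadical_bot)
  rw [← hJac]
  refine le_sInf fun m ⟨hJm, hm⟩ => ?_
  have : Algebra.FiniteType k (B ⧸ m) :=
    .of_surjective (Ideal.Quotient.factorₐ k hJm) (Ideal.Quotient.factor_surjective hJm)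
  obtain ⟨f, rfl⟩ := m.exists_algHom_ker_eq_of_isMaximal (k := k)
  exact h f hJm

theorem AlgHom.exists_comp_eq_of_isIntegral {B C : Type*} [CommRing B] [Algebra k B]
    [CommRing C] [Algebra k C] [Algebra.FiniteType k C] (φ : B →ₐ[k] C)
    (hφ : φ.toRingHom.IsIntegral) (f : B →ₐ[k] k) (hf : RingHom.ker φ ≤ RingHom.ker f) :
    ∃ g : C →ₐ[k] k, g.comp φ = f := by
  let : Algebra B C := φ.toRingHom.toAlgebra
  have : Algebra.IsIntegral B C := ⟨hφ⟩
  have := f.ker_isMaximal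
  obtain ⟨M, hM, hMf⟩ := Ideal.exists_ideal_over_maximal_of_isIntegral (RingHom.ker f) hf
  obtain ⟨g, rfl⟩ := M.exists_algHom_ker_eq_of_isMaximal (k := k)
  exact ⟨g, AlgHom.eq_of_ker_le hMf.le⟩

end AlgClosed

/-- Proposition A.3 (coordinate-ring form): for an integral `k`-algebra
homomorphism `φ : B → C` with `C` reduced and of finite type over the
algebraically closed field `k`, there is a unique radical ideal `I ⊆ B` with
finitely generated quotient whose `k`-points are exactly the `k`-points of `B`
factoring through `φ`. -/
theorem exists_unique_radical_ideal_image_of_integral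
    (k : Type*) [Field k] [IsAlgClosed k]
    (B : Type*) [CommRing B] [Algebra k B]
    (C : Type*) [CommRing C] [Algebra k C] [IsReduced C] [Algebra.FiniteType k C]
    (φ : B →ₐ[k] C) (hint : φ.toRingHom.IsIntegral) :
    ∃! I : Ideal B, I.IsRadical ∧ Algebra.FiniteType k (B ⧸ I) ∧
      ∀ f : B →ₐ[k] k,
        (I ≤ RingHom.ker f ↔ ∃ g : C →ₐ[k] k, g.comp φ = f) := by
  have hpoints (f : B →ₐ[k] k) : RingHom.ker φ ≤ RingHom.ker f ↔ ∃ g : C →ₐ[k] k, g.comp φ = f :=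
    ⟨φ.exists_comp_eq_of_isIntegral hint f, by
      rintro ⟨g, rfl⟩ b (hb : φ b = 0)
      simp [RingHom.mem_ker, hb]⟩
  have hrad : (RingHom.ker φ).IsRadical := Ideal.isRadical_bot.comap φ
  have hft := φ.finiteType_quotient_ker_of_isIntegral hint
  refine ⟨RingHom.ker φ, ⟨hrad, hft, hpoints⟩, fun J ⟨hJ, _, hJpoints⟩ => le_antisymm ?_ ?_⟩
  · exact hrad.le_of_forall_le_ker fun f hf => ((hJpoints f).2 ((hpoints f).1 hf))
  · exact hJ.le_of_forall_le_ker fun f hf => ((hpoints f).2 ((hJpoints f).1 hf))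
end

section
/- Let K be a field of characteristic zero and let A_0, A_1, A_∞ be 2×2 matrices over K which are unipotent (i.e., (A_i − 1)^2 = 0 for i = 0, 1, ∞, where 1 denotes the identity matrix) and satisfy A_0 · A_1 · A_∞ = 1. Then there exists a nonzero vector v ∈ K^2 with A_0 v = v, A_1 v = v, and A_∞ v = v; in other words, the three matrices have a common eigenvector (necessarily with eigenvalue 1). -/
/-!
Write `N = A₀ - 1` and `M = A₁ - 1`. Since `A₀ * A₁ = Ainf⁻¹` is unipotent, the square-zero matrices
`N`, `M` and `N + M + N * M` all have trace zero, so `trace (N * M) = 0`. For trace-zero `2 × 2`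
matrices, polarising Cayley–Hamilton gives `N * M + M * N = trace (N * M) • 1`, so `N` and `M`
anticommute. Anticommutation makes `M` preserve `ker N`: for `v ≠ 0` in `ker N`, either `M v = 0`
or `M v` is a common kernel vector, because `M ^ 2 = 0`.
-/

open Matrix

theorem sq_sub_one_eq_zero_of_mul_eq_one {R : Type*} [Ring R] {a b : R}
    (hab : a * b = 1) (hba : b * a = 1) (hb : (b - 1) ^ 2 = 0) : (a - 1) ^ 2 = 0 := by
  have ha : a * (b - 1) = 1 - a := by rw [mul_sub, hab, mul_one]
  have ha' : (b - 1) * a = 1 - a := by rw [sub_mul, hba, one_mul]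
  calc (a - 1) ^ 2 = (a * (b - 1)) * ((b - 1) * a) := by rw [ha, ha']; noncomm_ring
    _ = a * (b - 1) ^ 2 * a := by noncomm_ring
    _ = 0 := by rw [hb, mul_zero, zero_mul]

namespace Matrix

variable {n R : Type*} [Fintype n] [DecidableEq n]

theorem trace_eq_zero_of_sq_eq_zero [CommRing R] [IsReduced R] {N : Matrix n n R}
    (hN : N ^ 2 = 0) : N.trace = 0 :=
  (isNilpotent_trace_of_isNilpotent ⟨2, hN⟩).eq_zero

theorem det_eq_zero_of_sq_eq_zero [CommRing R] [IsReduced R] [Nonempty n] {N : Matrix n n R}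
    (hN : N ^ 2 = 0) : N.det = 0 :=
  IsReduced.eq_zero _ ⟨2, by rw [← det_pow, hN, det_zero]⟩

theorem mul_add_mul_eq_trace_mul_smul_one_of_trace_eq_zero [CommRing R]
    {X Y : Matrix (Fin 2) (Fin 2) R} (hX : X.trace = 0) (hY : Y.trace = 0) :
    X * Y + Y * X = (X * Y).trace • (1 : Matrix (Fin 2) (Fin 2) R) := by
  rw [trace_fin_two, add_eq_zero_iff_eq_neg'] at hX hY
  ext i j
  fin_cases i <;> fin_cases j <;> simp [mul_apply, trace_fin_two, hX, hY] <;> ring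

theorem exists_mulVec_eq_zero_and_mulVec_eq_zero_of_anticommute [CommRing R] [IsDomain R]
    {N M : Matrix n n R} (hN : N.det = 0) (hM : M ^ 2 = 0) (hNM : N * M + M * N = 0) :
    ∃ v ≠ 0, N *ᵥ v = 0 ∧ M *ᵥ v = 0 := by
  obtain ⟨v, hv, hNv⟩ := exists_mulVec_eq_zero_iff.mpr hN
  by_cases hMv : M *ᵥ v = 0
  · exact ⟨v, hv, hNv, hMv⟩
  refine ⟨M *ᵥ v, hMv, ?_, by rw [mulVec_mulVec, ← sq, hM, zero_mulVec]⟩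
  rw [mulVec_mulVec, eq_neg_of_add_eq_zero_left hNM, neg_mulVec, ← mulVec_mulVec, hNv,
    mulVec_zero, neg_zero]

end Matrix

theorem unipotent_triple_common_fixed_vector_general
    (K : Type*) [Field K]
    (A₀ A₁ Ainf : Matrix (Fin 2) (Fin 2) K)
    (h₀ : (A₀ - 1) ^ 2 = 0) (h₁ : (A₁ - 1) ^ 2 = 0) (hinf : (Ainf - 1) ^ 2 = 0)
    (hprod : A₀ * A₁ * Ainf = 1) :
    ∃ v : Fin 2 → K, v ≠ 0 ∧
      A₀.mulVec v = v ∧ A₁.mulVec v = v ∧ Ainf.mulVec v = v := by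
  have hinv : Ainf * (A₀ * A₁) = 1 := mul_eq_one_comm.mp hprod
  have h₀₁ : (A₀ * A₁ - 1) ^ 2 = 0 := sq_sub_one_eq_zero_of_mul_eq_one hprod hinv hinf
  have htr : ((A₀ - 1) * (A₁ - 1)).trace = 0 := by
    have hsum : A₀ * A₁ - 1 = (A₀ - 1) + (A₁ - 1) + (A₀ - 1) * (A₁ - 1) := by noncomm_ring
    have := trace_eq_zero_of_sq_eq_zero h₀₁
    rwa [hsum, trace_add, trace_add, trace_eq_zero_of_sq_eq_zero h₀,
      trace_eq_zero_of_sq_eq_zero h₁, zero_add, zero_add] at this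
  have hanti : (A₀ - 1) * (A₁ - 1) + (A₁ - 1) * (A₀ - 1) = 0 := by
    rw [mul_add_mul_eq_trace_mul_smul_one_of_trace_eq_zero (trace_eq_zero_of_sq_eq_zero h₀)
      (trace_eq_zero_of_sq_eq_zero h₁), htr, zero_smul]
  obtain ⟨v, hv, h₀v, h₁v⟩ := exists_mulVec_eq_zero_and_mulVec_eq_zero_of_anticommute
    (det_eq_zero_of_sq_eq_zero h₀) h₁ hanti
  rw [sub_mulVec, one_mulVec, sub_eq_zero] at h₀v h₁v
  refine ⟨v, hv, h₀v, h₁v, ?_⟩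
  calc Ainf *ᵥ v = Ainf *ᵥ ((A₀ * A₁) *ᵥ v) := by rw [← mulVec_mulVec, h₁v, h₀v]
    _ = v := by rw [mulVec_mulVec, hinv, one_mulVec]

/-- Three unipotent 2×2 matrices with product the identity have a common
nonzero fixed vector. -/
theorem unipotent_triple_common_fixed_vector
    (K : Type*) [Field K] [CharZero K]
    (A₀ A₁ Ainf : Matrix (Fin 2) (Fin 2) K)
    (h₀ : (A₀ - 1) ^ 2 = 0) (h₁ : (A₁ - 1) ^ 2 = 0) (hinf : (Ainf - 1) ^ 2 = 0)
    (hprod : A₀ * A₁ * Ainf = 1) :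
    ∃ v : Fin 2 → K, v ≠ 0 ∧
      A₀.mulVec v = v ∧ A₁.mulVec v = v ∧ Ainf.mulVec v = v :=
  unipotent_triple_common_fixed_vector_general K A₀ A₁ Ainf h₀ h₁ hinf hprod
end
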